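/- Pairwise angle between class-compositions: let D ≥ 2 and let p = exp(−√(D/(D−1))) / (1 + (D−1)·exp(−√(D/(D−1)))), so that each class-composition c^{(k)}(p) has Aitchison norm 1. Then for any two distinct classes k ≠ l in {1, …, D}, the Aitchison inner product satisfies ⟨c^{(k)}(p), c^{(l)}(p)⟩_A = −1/(D−1). (For D = 4 this gives the cosine −1/3, i.e. pairwise angles of ≈ 109.5°, the methane-molecule geometry; in particular, distinct class-compositions are never orthogonal.) -/

import Mathlib

/-! The log-ratios of `c^{(m)}(p)` are the differences of the coordinates of `a • e_m` with
`a = log((1 − (D−1)p)/p)`, so the Aitchison inner product of `c^{(k)}(p)` and `c^{(l)}(p)` is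
`a² (δ_{kl} − 1/D)`. The choice `p = p*` makes `a = √(D/(D−1))`. -/

open Real

/-- The Aitchison inner product of vectors `x, y ∈ ℝ^D` with strictly positive
entries: `⟨x, y⟩_A = (1/(2D)) Σ_i Σ_j log(x_i/x_j)·log(y_i/y_j)`. -/
noncomputable def aitchisonInner (D : ℕ) (x y : Fin D → ℝ) : ℝ :=
  (1 / (2 * (D : ℝ))) *
    ∑ i : Fin D, ∑ j : Fin D, Real.log (x i / x j) * Real.log (y i / y j)

/-- The `k`-class-composition `c^{(k)}(p) ∈ ℝ^D`: its `k`-th entry is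
`1 − (D−1)p` and all its other entries are `p`. -/
noncomputable def classComp (D : ℕ) (k : Fin D) (p : ℝ) : Fin D → ℝ :=
  fun i => if i = k then 1 - ((D : ℝ) - 1) * p else p

/-- The value `p* = exp(−√(D/(D−1))) / (1 + (D−1)·exp(−√(D/(D−1))))` making the
class-compositions unit-norm. -/
noncomputable def pstar (D : ℕ) : ℝ :=
  Real.exp (-Real.sqrt ((D : ℝ) / ((D : ℝ) - 1))) /
    (1 + ((D : ℝ) - 1) * Real.exp (-Real.sqrt ((D : ℝ) / ((D : ℝ) - 1))))

open Finset

lemma sum_sum_sub_mul_sub {ι : Type*} [Fintype ι] (u v : ι → ℝ) :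
    ∑ i, ∑ j, (u i - u j) * (v i - v j)
      = 2 * (Fintype.card ι * ∑ i, u i * v i - (∑ i, u i) * ∑ i, v i) := by
  simp only [sub_mul, mul_sub, sum_sub_distrib, sum_const, card_univ, nsmul_eq_mul,
    ← mul_sum, ← sum_mul]
  ring

lemma aitchisonInner_eq_of_log_div {D : ℕ} {x y u v : Fin D → ℝ}
    (hx : ∀ i j, log (x i / x j) = u i - u j) (hy : ∀ i j, log (y i / y j) = v i - v j) :
    aitchisonInner D x y = ∑ i, u i * v i - (∑ i, u i) * (∑ i, v i) / D := by
  rcases Nat.eq_zero_or_pos D with rfl | hD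
  · simp [aitchisonInner]
  simp only [aitchisonInner, hx, hy, sum_sum_sub_mul_sub, Fintype.card_fin]
  field_simp

lemma log_classComp_div (D : ℕ) (m : Fin D) (p : ℝ) (i j : Fin D) :
    log (classComp D m p i / classComp D m p j)
      = (Pi.single m (log ((1 - (D - 1) * p) / p)) : Fin D → ℝ) i
        - (Pi.single m (log ((1 - (D - 1) * p) / p)) : Fin D → ℝ) j := by
  simp only [classComp, Pi.single_apply]
  split_ifs <;> simp [log_div_self, ← log_inv]

lemma log_one_sub_mul_div_eq {c : ℝ} (hc : 0 ≤ c) (t : ℝ) :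
    log ((1 - c * (exp (-t) / (1 + c * exp (-t)))) / (exp (-t) / (1 + c * exp (-t)))) = t := by
  have hden : 1 + c * exp (-t) ≠ 0 := by positivity
  have hratio : (1 - c * (exp (-t) / (1 + c * exp (-t)))) / (exp (-t) / (1 + c * exp (-t)))
      = (exp (-t))⁻¹ := by
    field_simp
    ring
  rw [hratio, log_inv, log_exp, neg_neg]

/-- Pairwise angle between the unit-norm class-compositions: for distinct
classes `k ≠ l`, the Aitchison inner product of `c^{(k)}(p*)` and `c^{(l)}(p*)`
equals `−1/(D−1)`. -/
theorem aitchisonInner_classComp (D : ℕ) (hD : 2 ≤ D) (k l : Fin D) (hkl : k ≠ l) :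
    aitchisonInner D (classComp D k (pstar D)) (classComp D l (pstar D))
      = -1 / ((D : ℝ) - 1) := by
  have hD' : (2 : ℝ) ≤ D := by exact_mod_cast hD
  set s := √((D : ℝ) / (D - 1))
  have hlog : log ((1 - (D - 1) * pstar D) / pstar D) = s :=
    log_one_sub_mul_div_eq (by linarith) s
  have hs : s * s = D / (D - 1) := mul_self_sqrt (div_nonneg (by linarith) (by linarith))
  have horth : ∀ i, (Pi.single k s : Fin D → ℝ) i * (Pi.single l s : Fin D → ℝ) i = 0 :=
    fun i => by simp only [Pi.single_apply]; split_ifs <;> simp_all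
  rw [aitchisonInner_eq_of_log_div (log_classComp_div D k _) (log_classComp_div D l _)]
  simp only [hlog, horth, sum_const_zero, sum_pi_single', mem_univ, if_true, hs]
  field_simp
  ring
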